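/- Let d ≥ 1 and let γ be the standard Gaussian measure on ℝ^d. Let m₁, m₂ ∈ ℝ^d satisfy m₁ · m₂ < 0, and let μ = N(m₁, Id) and ν = N(m₂, Id) be the Gaussian measures with identity covariance and means m₁ and m₂ respectively. Then W₂(μ, ν)² = |m₁ − m₂|², Ent_γ(μ) = |m₁|²/2, Ent_γ(ν) = |m₂|²/2, and W₂(μ, ν)² > 2 Ent_γ(μ) + 2 Ent_γ(ν). In particular, the centering assumption in the symmetrized Talagrand inequality cannot be removed. -/

import Mathlib

open MeasureTheory ENNReal
open scoped RealInnerProductSpace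

/-- The standard Gaussian measure on `ℝ^d`, with density
`(2π)^{-d/2} exp(-|x|²/2)` with respect to Lebesgue measure. -/
noncomputable def stdGaussian (d : ℕ) : Measure (EuclideanSpace ℝ (Fin d)) :=
  volume.withDensity fun x =>
    ENNReal.ofReal ((2 * Real.pi) ^ (-(d : ℝ) / 2) * Real.exp (-‖x‖ ^ 2 / 2))

/-- `π` is a coupling of `μ` and `ν`: a measure on the product with the given marginals. -/
def IsCoupling {E : Type*} [MeasurableSpace E] (π : Measure (E × E)) (μ ν : Measure E) : Prop :=
  π.map Prod.fst = μ ∧ π.map Prod.snd = ν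

/-- The squared `L²` Kantorovich-Wasserstein distance `W₂(μ,ν)²`: the infimum of
`∫ |x-y|² dπ` over all couplings `π` of `μ` and `ν`. -/
noncomputable def W2sq {E : Type*} [MeasurableSpace E] [NormedAddCommGroup E]
    (μ ν : Measure E) : ℝ≥0∞ :=
  ⨅ (π : Measure (E × E)) (_ : IsCoupling π μ ν), ∫⁻ p, (‖p.1 - p.2‖₊ : ℝ≥0∞) ^ 2 ∂π

open Classical in
/-- The relative entropy (KL divergence) `Ent_γ(μ) = ∫ log(dμ/dγ) dμ` if `μ ≪ γ` (and the
integral makes sense), and `+∞` otherwise. -/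
noncomputable def relEnt {E : Type*} [MeasurableSpace E] (μ γ : Measure E) : ℝ≥0∞ :=
  if μ ≪ γ ∧ Integrable (fun x => Real.log (μ.rnDeriv γ x).toReal) μ
  then ENNReal.ofReal (∫ x, Real.log (μ.rnDeriv γ x).toReal ∂μ)
  else ∞

/-- The Gaussian measure `N(m, A)` on `ℝ^d` with mean `m` and (invertible) covariance
matrix `A`, given by its density with respect to Lebesgue measure. -/
noncomputable def gaussianMeasure {d : ℕ} (m : EuclideanSpace ℝ (Fin d))
    (A : Matrix (Fin d) (Fin d) ℝ) : Measure (EuclideanSpace ℝ (Fin d)) :=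
  volume.withDensity fun x =>
    ENNReal.ofReal (((2 * Real.pi) ^ d * A.det) ^ (-(1 : ℝ) / 2) *
      Real.exp (-⟪x - m, Matrix.toEuclideanLin A⁻¹ (x - m)⟫ / 2))

/-!
Translating `γ` by `m` gives `N(m, Id)`, whose density with respect to `γ` is
`exp (⟪x, m⟫ - |m|²/2)`; its entropy is therefore `𝔼⟪Y, m⟫ - |m|²/2 = |m|²/2` for
`Y ∼ N(m, Id)`. The coupling `(X + m₁, X + m₂)`, `X ∼ γ`, costs `|m₁ - m₂|²`, and no coupling
costs less because by Jensen `𝔼|X - Y|² ≥ |𝔼X - 𝔼Y|²`. Hence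
`W₂(μ,ν)² = |m₁|² + |m₂|² - 2⟪m₁, m₂⟫`, which exceeds `2 Ent_γ(μ) + 2 Ent_γ(ν) = |m₁|² + |m₂|²`
exactly when `⟪m₁, m₂⟫ < 0`.
-/

theorem MeasureTheory.MeasurePreserving.map_withDensity {α β : Type*} [MeasurableSpace α]
    [MeasurableSpace β] {μ : Measure α} {ν : Measure β} {e : α ≃ᵐ β}
    (he : MeasurePreserving e μ ν) (g : α → ℝ≥0∞) :
    (μ.withDensity g).map e = ν.withDensity (g ∘ e.symm) := by
  ext s hs
  rw [Measure.map_apply e.measurable hs, withDensity_apply _ (e.measurable hs),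
    withDensity_apply _ hs, ← he.setLIntegral_comp_preimage_emb e.measurableEmbedding]
  simp

theorem integral_id_eq_zero_of_isNegInvariant {E : Type*} [NormedAddCommGroup E]
    [NormedSpace ℝ E] [MeasurableSpace E] [MeasurableNeg E] (μ : Measure E) [μ.IsNegInvariant] :
    ∫ x, x ∂μ = 0 := by
  have h : ∫ x, -x ∂μ = ∫ x, x ∂μ := integral_neg_eq_self id μ
  rw [integral_neg] at h
  have h2 : (2 : ℝ) • ∫ x, x ∂μ = 0 := by rw [two_smul]; nth_rw 1 [← h]; exact neg_add_cancel _
  exact (smul_eq_zero.mp h2).resolve_left two_ne_zero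

theorem relEnt_eq_integral_of_eq_withDensity_exp {E : Type*} [MeasurableSpace E]
    {μ γ : Measure E} [SigmaFinite γ] {f : E → ℝ}
    (hμ : μ = γ.withDensity fun x => ENNReal.ofReal (Real.exp (f x)))
    (hf : Measurable f) (hfi : Integrable f μ) :
    relEnt μ γ = ENNReal.ofReal (∫ x, f x ∂μ) := by
  have hac : μ ≪ γ := hμ ▸ withDensity_absolutelyContinuous _ _
  have hlog : (fun x => Real.log (μ.rnDeriv γ x).toReal) =ᵐ[μ] f := by
    have hrn : μ.rnDeriv γ =ᵐ[γ] fun x => ENNReal.ofReal (Real.exp (f x)) :=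
      hμ ▸ Measure.rnDeriv_withDensity γ (ENNReal.measurable_ofReal.comp hf.exp)
    filter_upwards [hac.ae_eq hrn] with x hx
    rw [hx, ENNReal.toReal_ofReal (Real.exp_nonneg _), Real.log_exp]
  rw [relEnt, if_pos ⟨hac, hfi.congr hlog.symm⟩, integral_congr_ae hlog]

section Coupling

variable {E : Type*} [MeasurableSpace E]

theorem IsCoupling.isProbabilityMeasure {π : Measure (E × E)} {μ ν : Measure E}
    [IsProbabilityMeasure μ] (h : IsCoupling π μ ν) : IsProbabilityMeasure π :=
  ⟨by simpa [Measure.map_apply measurable_fst MeasurableSet.univ] using congrArg (· .univ) h.1⟩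

variable [NormedAddCommGroup E]

theorem W2sq_map_add_const_le [MeasurableAdd E] (μ : Measure E) [IsProbabilityMeasure μ]
    (a b : E) : W2sq (μ.map (· + a)) (μ.map (· + b)) ≤ ‖a - b‖ₑ ^ 2 := by
  have hT : Measurable fun x : E => (x + a, x + b) :=
    (measurable_add_const a).prodMk (measurable_add_const b)
  have hcoup : IsCoupling (μ.map fun x => (x + a, x + b)) (μ.map (· + a)) (μ.map (· + b)) :=
    ⟨by rw [Measure.map_map measurable_fst hT]; rfl,
      by rw [Measure.map_map measurable_snd hT]; rfl⟩
  refine iInf₂_le_of_le _ hcoup ((lintegral_map_le _ _).trans_eq ?_)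
  simp only [add_sub_add_left_eq_sub, lintegral_const, measure_univ, mul_one]
  rfl

variable [NormedSpace ℝ E] [BorelSpace E] [SecondCountableTopology E]

theorem IsCoupling.integral_fst_sub_snd {π : Measure (E × E)} {μ ν : Measure E}
    (h : IsCoupling π μ ν) (hμ : Integrable id μ) (hν : Integrable id ν) :
    ∫ p, p.1 - p.2 ∂π = ∫ x, x ∂μ - ∫ x, x ∂ν := by
  rw [← h.1, ← h.2, integral_map (f := fun x => x) measurable_fst.aemeasurable
    aestronglyMeasurable_id, integral_map (f := fun x => x) measurable_snd.aemeasurable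
    aestronglyMeasurable_id]
  rw [← h.1] at hμ
  rw [← h.2] at hν
  exact integral_sub (hμ.comp_measurable measurable_fst) (hν.comp_measurable measurable_snd)

theorem enorm_integral_sq_le_lintegral_enorm_sq {α F : Type*} [MeasurableSpace α]
    [NormedAddCommGroup F] [NormedSpace ℝ F] {μ : Measure α} [IsProbabilityMeasure μ]
    {f : α → F} (hf : AEStronglyMeasurable f μ) :
    ‖∫ x, f x ∂μ‖ₑ ^ 2 ≤ ∫⁻ x, ‖f x‖ₑ ^ 2 ∂μ := by
  calc ‖∫ x, f x ∂μ‖ₑ ^ 2 ≤ eLpNorm f 1 μ ^ 2 := by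
        rw [eLpNorm_one_eq_lintegral_enorm]; gcongr; exact enorm_integral_le_lintegral_enorm f
    _ ≤ eLpNorm f 2 μ ^ 2 := by
        gcongr; exact eLpNorm_le_eLpNorm_of_exponent_le one_le_two hf
    _ = ∫⁻ x, ‖f x‖ₑ ^ 2 ∂μ := by
        have h := eLpNorm_nnreal_pow_eq_lintegral (f := f) (μ := μ) (p := 2) two_ne_zero
        norm_num at h
        exact_mod_cast h

theorem enorm_integral_sub_sq_le_W2sq {μ ν : Measure E} [IsProbabilityMeasure μ]
    (hμ : Integrable id μ) (hν : Integrable id ν) :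
    ‖∫ x, x ∂μ - ∫ x, x ∂ν‖ₑ ^ 2 ≤ W2sq μ ν := by
  refine le_iInf₂ fun π hπ => ?_
  have := hπ.isProbabilityMeasure
  rw [← hπ.integral_fst_sub_snd hμ hν]
  exact enorm_integral_sq_le_lintegral_enorm_sq (by fun_prop)

end Coupling

section Gaussian

theorem integrable_exp_neg_mul_sq_norm {V : Type*} [NormedAddCommGroup V] [InnerProductSpace ℝ V]
    [FiniteDimensional ℝ V] [MeasurableSpace V] [BorelSpace V] {b : ℝ} (hb : 0 < b) :
    Integrable fun v : V => Real.exp (-b * ‖v‖ ^ 2) :=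
  .of_integral_ne_zero <| by rw [GaussianFourier.integral_rexp_neg_mul_sq_norm hb]; positivity

variable {d : ℕ}

noncomputable def stdGaussianPDF (d : ℕ) (x : EuclideanSpace ℝ (Fin d)) : ℝ :=
  (2 * Real.pi) ^ (-(d : ℝ) / 2) * Real.exp (-‖x‖ ^ 2 / 2)

theorem stdGaussian_eq_withDensity :
    stdGaussian d = volume.withDensity fun x => ENNReal.ofReal (stdGaussianPDF d x) := rfl

@[fun_prop]
theorem continuous_stdGaussianPDF : Continuous (stdGaussianPDF d) := by
  unfold stdGaussianPDF; fun_prop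

theorem stdGaussianPDF_nonneg (x : EuclideanSpace ℝ (Fin d)) : 0 ≤ stdGaussianPDF d x := by
  unfold stdGaussianPDF; positivity

theorem stdGaussianPDF_eq_const_mul_exp (x : EuclideanSpace ℝ (Fin d)) :
    stdGaussianPDF d x = (2 * Real.pi) ^ (-(d : ℝ) / 2) * Real.exp (-(1 / 2) * ‖x‖ ^ 2) := by
  unfold stdGaussianPDF; ring_nf

theorem integrable_stdGaussianPDF : Integrable (stdGaussianPDF d) := by
  simp_rw [funext stdGaussianPDF_eq_const_mul_exp]
  exact (integrable_exp_neg_mul_sq_norm one_half_pos).const_mul _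

theorem integral_stdGaussianPDF : ∫ x, stdGaussianPDF d x = 1 := by
  simp_rw [stdGaussianPDF_eq_const_mul_exp, integral_const_mul]
  rw [GaussianFourier.integral_rexp_neg_mul_sq_norm one_half_pos, finrank_euclideanSpace_fin,
    div_div_eq_mul_div, div_one, mul_comm Real.pi, ← Real.rpow_add (by positivity), neg_div,
    neg_add_cancel, Real.rpow_zero]

instance : IsProbabilityMeasure (stdGaussian d) := by
  constructor
  rw [stdGaussian_eq_withDensity, withDensity_apply _ MeasurableSet.univ, Measure.restrict_univ,
    ← ofReal_integral_eq_lintegral_ofReal integrable_stdGaussianPDF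
      (.of_forall stdGaussianPDF_nonneg), integral_stdGaussianPDF, ENNReal.ofReal_one]

instance : (stdGaussian d).IsNegInvariant := by
  constructor
  rw [Measure.neg, stdGaussian_eq_withDensity]
  exact ((Measure.measurePreserving_neg volume).map_withDensity (e := .neg _) _).trans <| by
    congr 1 with x
    simp [stdGaussianPDF]

theorem integrable_id_stdGaussian : Integrable id (stdGaussian d) := by
  rw [stdGaussian_eq_withDensity, integrable_withDensity_iff_integrable_smul' (by fun_prop)
    (.of_forall fun _ => ofReal_lt_top)]
  simp_rw [ENNReal.toReal_ofReal (stdGaussianPDF_nonneg _)]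
  refine ((integrable_exp_neg_mul_sq_norm (V := EuclideanSpace ℝ (Fin d))
    (by norm_num : (0 : ℝ) < 1 / 4)).const_mul ((2 * Real.pi) ^ (-(d : ℝ) / 2))).mono'
    (by fun_prop) (.of_forall fun x => ?_)
  -- `‖x‖ ≤ 1 + ‖x‖² / 4 ≤ exp (‖x‖² / 4)` trades the linear factor for half of the Gaussian decay
  have hx : ‖x‖ ≤ Real.exp (‖x‖ ^ 2 / 4) := by
    nlinarith [sq_nonneg (‖x‖ / 2 - 1), Real.add_one_le_exp (‖x‖ ^ 2 / 4)]
  rw [norm_smul, Real.norm_of_nonneg (stdGaussianPDF_nonneg x), stdGaussianPDF, mul_assoc]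
  gcongr
  calc Real.exp (-‖x‖ ^ 2 / 2) * ‖x‖ ≤ Real.exp (-‖x‖ ^ 2 / 2) * Real.exp (‖x‖ ^ 2 / 4) := by
        gcongr
    _ = Real.exp (-(1 / 4) * ‖x‖ ^ 2) := by rw [← Real.exp_add]; ring_nf

theorem gaussianMeasure_one (m : EuclideanSpace ℝ (Fin d)) :
    gaussianMeasure m 1 =
      volume.withDensity fun x => ENNReal.ofReal (stdGaussianPDF d (x - m)) := by
  unfold gaussianMeasure stdGaussianPDF
  congr 1 with x
  have hId : Matrix.toEuclideanLin (1 : Matrix (Fin d) (Fin d) ℝ) (x - m) = x - m := by simp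
  rw [inv_one, Matrix.det_one, mul_one, hId, real_inner_self_eq_norm_sq, ← Real.rpow_natCast,
    ← Real.rpow_mul (by positivity)]
  ring_nf

theorem map_add_stdGaussian (m : EuclideanSpace ℝ (Fin d)) :
    (stdGaussian d).map (· + m) = gaussianMeasure m 1 := by
  rw [stdGaussian_eq_withDensity, gaussianMeasure_one]
  exact (measurePreserving_add_right volume m).map_withDensity (e := .addRight m) _

instance (m : EuclideanSpace ℝ (Fin d)) : IsProbabilityMeasure (gaussianMeasure m 1) := by
  rw [← map_add_stdGaussian]
  exact Measure.isProbabilityMeasure_map (measurable_add_const m).aemeasurable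

theorem integrable_id_gaussianMeasure_one (m : EuclideanSpace ℝ (Fin d)) :
    Integrable id (gaussianMeasure m 1) := by
  rw [← map_add_stdGaussian, integrable_map_measure aestronglyMeasurable_id
    (measurable_add_const m).aemeasurable]
  exact integrable_id_stdGaussian.add (integrable_const m)

theorem integral_id_gaussianMeasure_one (m : EuclideanSpace ℝ (Fin d)) :
    ∫ x, x ∂gaussianMeasure m 1 = m := by
  rw [← map_add_stdGaussian, integral_map (f := fun x => x) (measurable_add_const m).aemeasurable
    aestronglyMeasurable_id,
    integral_add (f := fun x => x) integrable_id_stdGaussian (integrable_const m),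
    integral_id_eq_zero_of_isNegInvariant, integral_const, probReal_univ, one_smul, zero_add]

theorem gaussianMeasure_one_eq_withDensity_stdGaussian (m : EuclideanSpace ℝ (Fin d)) :
    gaussianMeasure m 1 =
      (stdGaussian d).withDensity fun x => ENNReal.ofReal (Real.exp (⟪x, m⟫ - ‖m‖ ^ 2 / 2)) := by
  rw [gaussianMeasure_one, stdGaussian_eq_withDensity,
    ← withDensity_mul _ (by fun_prop) (by fun_prop)]
  congr 1 with x
  rw [Pi.mul_apply, ← ENNReal.ofReal_mul (stdGaussianPDF_nonneg x), stdGaussianPDF,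
    stdGaussianPDF, mul_assoc, ← Real.exp_add, norm_sub_sq_real]
  ring_nf

theorem relEnt_gaussianMeasure_one (m : EuclideanSpace ℝ (Fin d)) :
    relEnt (gaussianMeasure m 1) (stdGaussian d) = ENNReal.ofReal (‖m‖ ^ 2 / 2) := by
  have hint : Integrable (fun x => ⟪x, m⟫) (gaussianMeasure m 1) :=
    ((innerSL ℝ m).integrable_comp (integrable_id_gaussianMeasure_one m)).congr
      (.of_forall fun x => real_inner_comm x m)
  have hmean : ∫ x, ⟪x, m⟫ ∂gaussianMeasure m 1 = ‖m‖ ^ 2 := by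
    simp_rw [real_inner_comm m]
    rw [integral_inner (f := fun x => x) (integrable_id_gaussianMeasure_one m),
      integral_id_gaussianMeasure_one, real_inner_self_eq_norm_sq]
  rw [relEnt_eq_integral_of_eq_withDensity_exp (gaussianMeasure_one_eq_withDensity_stdGaussian m)
    (by fun_prop) (hint.sub (integrable_const _)), integral_sub hint (integrable_const _), hmean,
    integral_const, probReal_univ, one_smul]
  ring_nf

theorem W2sq_gaussianMeasure_one (m₁ m₂ : EuclideanSpace ℝ (Fin d)) :
    W2sq (gaussianMeasure m₁ 1) (gaussianMeasure m₂ 1) = ENNReal.ofReal (‖m₁ - m₂‖ ^ 2) := by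
  rw [ENNReal.ofReal_pow (norm_nonneg _), ofReal_norm]
  refine le_antisymm ?_ ?_
  · simpa only [map_add_stdGaussian] using W2sq_map_add_const_le (stdGaussian d) m₁ m₂
  · simpa only [integral_id_gaussianMeasure_one] using enorm_integral_sub_sq_le_W2sq
      (integrable_id_gaussianMeasure_one m₁) (integrable_id_gaussianMeasure_one m₂)

end Gaussian

theorem symmetrized_talagrand_fails_noncentered_general (d : ℕ)
    (m₁ m₂ : EuclideanSpace ℝ (Fin d)) (hm : ⟪m₁, m₂⟫ < 0) :
    W2sq (gaussianMeasure m₁ 1) (gaussianMeasure m₂ 1) = ENNReal.ofReal (‖m₁ - m₂‖ ^ 2) ∧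
    relEnt (gaussianMeasure m₁ 1) (stdGaussian d) = ENNReal.ofReal (‖m₁‖ ^ 2 / 2) ∧
    relEnt (gaussianMeasure m₂ 1) (stdGaussian d) = ENNReal.ofReal (‖m₂‖ ^ 2 / 2) ∧
    2 * relEnt (gaussianMeasure m₁ 1) (stdGaussian d) +
        2 * relEnt (gaussianMeasure m₂ 1) (stdGaussian d) <
      W2sq (gaussianMeasure m₁ 1) (gaussianMeasure m₂ 1) := by
  refine ⟨W2sq_gaussianMeasure_one m₁ m₂, relEnt_gaussianMeasure_one m₁,
    relEnt_gaussianMeasure_one m₂, ?_⟩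
  rw [W2sq_gaussianMeasure_one, relEnt_gaussianMeasure_one, relEnt_gaussianMeasure_one]
  have two_mul_half (a : ℝ) : 2 * ENNReal.ofReal (a / 2) = ENNReal.ofReal a := by
    rw [← ENNReal.ofReal_ofNat 2, ← ENNReal.ofReal_mul zero_le_two, mul_div_cancel₀ a two_ne_zero]
  rw [two_mul_half, two_mul_half, ← ENNReal.ofReal_add (by positivity) (by positivity),
    ENNReal.ofReal_lt_ofReal_iff_of_nonneg (by positivity), norm_sub_sq_real]
  linarith

/-- **The centering assumption cannot be removed**: for `μ = N(m₁, Id)`, `ν = N(m₂, Id)` with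
`m₁ · m₂ < 0` one has `W₂(μ,ν)² = |m₁ - m₂|²`, `Ent_γ(μ) = |m₁|²/2`, `Ent_γ(ν) = |m₂|²/2`, and
`W₂(μ,ν)² > 2 Ent_γ(μ) + 2 Ent_γ(ν)`. -/
theorem symmetrized_talagrand_fails_noncentered (d : ℕ) (hd : 1 ≤ d)
    (m₁ m₂ : EuclideanSpace ℝ (Fin d)) (hm : ⟪m₁, m₂⟫ < 0) :
    W2sq (gaussianMeasure m₁ 1) (gaussianMeasure m₂ 1) = ENNReal.ofReal (‖m₁ - m₂‖ ^ 2) ∧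
    relEnt (gaussianMeasure m₁ 1) (stdGaussian d) = ENNReal.ofReal (‖m₁‖ ^ 2 / 2) ∧
    relEnt (gaussianMeasure m₂ 1) (stdGaussian d) = ENNReal.ofReal (‖m₂‖ ^ 2 / 2) ∧
    2 * relEnt (gaussianMeasure m₁ 1) (stdGaussian d) +
        2 * relEnt (gaussianMeasure m₂ 1) (stdGaussian d) <
      W2sq (gaussianMeasure m₁ 1) (gaussianMeasure m₂ 1) :=
  symmetrized_talagrand_fails_noncentered_general d m₁ m₂ hm
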